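/- For positive reals r, s, d, define V(f) = s·f·(1 − Π₀(r, s·f, d)) for f ∈ [0,1], where Π₀(r,σ,d) = (∑_{l=0}^∞ r^l / ∏_{m=1}^{l} (σ + m·d))^{-1}. Then V(f) < r for all f ∈ [0,1], i.e., the long-run completion-rate (hence revenue rate with unit rewards) from a queue never exceeds its arrival rate. -/

import Mathlib

open scoped BigOperators

/-- Term of the normalizing series of the birth-death queue:
`r^l / ∏_{m=1}^{l} (s + m·d)`, empty product = 1. -/
noncomputable def qterm (r s d : ℝ) (l : ℕ) : ℝ :=
  r ^ l / ∏ m ∈ Finset.Icc 1 l, (s + (m : ℝ) * d)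

/-- Stationary empty-queue probability `Π₀(r,s,d)`. -/
noncomputable def Pi0 (r s d : ℝ) : ℝ := (∑' l : ℕ, qterm r s d l)⁻¹

/-!
The terms `q_l = qterm r σ d l` satisfy the balance equation
`q_{l+1} (σ + (l+1) d) = r q_l`, so `σ q_{l+1} < r q_l` for every `l` because `d > 0`.
Summing over `l` gives `σ (Z - 1) < r Z` for `Z = ∑ q_l = Π₀⁻¹`, i.e. `σ (1 - Π₀) < r`.
-/

section Queue

variable {r s d : ℝ}

lemma factorial_mul_pow_le_prod_Icc (hs : 0 ≤ s) (hd : 0 < d) (l : ℕ) :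
    (l.factorial : ℝ) * d ^ l ≤ ∏ m ∈ Finset.Icc 1 l, (s + (m : ℝ) * d) := by
  have hfac : (l.factorial : ℝ) * d ^ l = ∏ m ∈ Finset.Icc 1 l, ((m : ℝ) * d) := by
    rw [Finset.prod_mul_distrib, Finset.prod_const, Nat.card_Icc, Nat.add_sub_cancel,
      ← Nat.cast_prod, ← Finset.Ico_add_one_right_eq_Icc, Finset.prod_Ico_id_eq_factorial]
  rw [hfac]
  exact Finset.prod_le_prod (fun m _ => by positivity) (fun m _ => by linarith)

lemma prod_Icc_add_mul_pos (hs : 0 ≤ s) (hd : 0 < d) (l : ℕ) :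
    0 < ∏ m ∈ Finset.Icc 1 l, (s + (m : ℝ) * d) :=
  lt_of_lt_of_le (by positivity) (factorial_mul_pow_le_prod_Icc hs hd l)

lemma qterm_zero : qterm r s d 0 = 1 := by
  simp [qterm]

lemma qterm_pos (hr : 0 < r) (hs : 0 ≤ s) (hd : 0 < d) (l : ℕ) : 0 < qterm r s d l :=
  div_pos (pow_pos hr l) (prod_Icc_add_mul_pos hs hd l)

lemma qterm_le_pow_div_factorial (hr : 0 < r) (hs : 0 ≤ s) (hd : 0 < d) (l : ℕ) :
    qterm r s d l ≤ (r / d) ^ l / l.factorial := by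
  rw [qterm, div_pow, div_div, mul_comm (d ^ l)]
  exact div_le_div_of_nonneg_left (by positivity) (by positivity)
    (factorial_mul_pow_le_prod_Icc hs hd l)

lemma summable_qterm (hr : 0 < r) (hs : 0 ≤ s) (hd : 0 < d) : Summable (qterm r s d) :=
  (Real.summable_pow_div_factorial (r / d)).of_nonneg_of_le
    (fun l => (qterm_pos hr hs hd l).le) (qterm_le_pow_div_factorial hr hs hd)

lemma qterm_succ_mul (hs : 0 ≤ s) (hd : 0 < d) (l : ℕ) :
    qterm r s d (l + 1) * (s + ((l : ℝ) + 1) * d) = r * qterm r s d l := by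
  have hne : s + ((l : ℝ) + 1) * d ≠ 0 := by positivity
  rw [qterm, qterm, Finset.prod_Icc_succ_top (Nat.le_add_left 1 l)]
  push_cast
  rw [← div_div, div_mul_cancel₀ _ hne, pow_succ, mul_comm (r ^ l) r, mul_div_assoc]

lemma mul_qterm_succ_lt (hr : 0 < r) (hs : 0 ≤ s) (hd : 0 < d) (l : ℕ) :
    s * qterm r s d (l + 1) < r * qterm r s d l := by
  rw [← qterm_succ_mul hs hd l]
  have hq := qterm_pos hr hs hd (l + 1)
  have hl : 0 < ((l : ℝ) + 1) * d := by positivity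
  nlinarith

lemma mul_tsum_qterm_sub_one_lt (hr : 0 < r) (hs : 0 ≤ s) (hd : 0 < d) :
    s * (∑' l, qterm r s d l - 1) < r * ∑' l, qterm r s d l := by
  have hsum := summable_qterm hr hs hd
  calc s * (∑' l, qterm r s d l - 1) = ∑' l, s * qterm r s d (l + 1) := by
        rw [hsum.tsum_eq_zero_add, qterm_zero, tsum_mul_left, add_sub_cancel_left]
    _ < ∑' l, r * qterm r s d l :=
        Summable.tsum_lt_tsum_of_nonneg (i := 0)
          (fun l => mul_nonneg hs (qterm_pos hr hs hd _).le)
          (fun l => (mul_qterm_succ_lt hr hs hd l).le) (mul_qterm_succ_lt hr hs hd 0)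
          (hsum.mul_left r)
    _ = r * ∑' l, qterm r s d l := tsum_mul_left

lemma mul_one_sub_Pi0_lt (hr : 0 < r) (hs : 0 ≤ s) (hd : 0 < d) :
    s * (1 - Pi0 r s d) < r := by
  have hsum := summable_qterm hr hs hd
  have hZ : 0 < ∑' l, qterm r s d l := lt_of_lt_of_le one_pos <| by
    simpa [qterm_zero] using
      hsum.le_tsum 0 (fun l _ => (qterm_pos hr hs hd l).le)
  calc s * (1 - Pi0 r s d) = s * (∑' l, qterm r s d l - 1) / ∑' l, qterm r s d l := by
        rw [Pi0]; field_simp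
    _ < r := (div_lt_iff₀ hZ).2 (mul_tsum_qterm_sub_one_lt hr hs hd)

end Queue

theorem stmt6 (r s d : ℝ) (hr : 0 < r) (hs : 0 < s) (hd : 0 < d) :
    ∀ f ∈ Set.Icc (0 : ℝ) 1, s * f * (1 - Pi0 r (s * f) d) < r := by
  rintro f ⟨hf0, -⟩
  exact mul_one_sub_Pi0_lt hr (mul_nonneg hs.le hf0) hd
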